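/- Let γ, l > 0 and let D_{γ,l} be the self-adjoint operator on L²(0,l) acting as f ↦ −f'' with domain {f ∈ H²(0,l) : −f'(0) − γ f(0) = 0 and f(l) = 0}. Then D_{γ,l} has a negative eigenvalue if and only if γ l > 1, and in that case the negative eigenvalue is unique. -/

import Mathlib

/-!
For `E = -k²`, the integrating factors `e^{∓kx}` show that every solution of `f'' = k² f` satisfies
`k f(x) = k f(0) cosh(kx) + f'(0) sinh(kx)`. The Robin condition gives `f'(0) = -γ f(0)`, so a
nonzero solution vanishes at `l` iff `k cosh(kl) = γ sinh(kl)`, i.e. `t coth t = γ l` for `t = kl`.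
As `t coth t` is strictly increasing on `(0, ∞)` (because `sinh 2t > 2t`), stays above `1` and is
unbounded, this equation has a positive root iff `γ l > 1`, and then exactly one.
-/

/-- `E` is an eigenvalue of the operator `f ↦ −f''` on `(0,l)` with Robin condition
`−f'(0) − γ f(0) = 0` at the left endpoint and Dirichlet condition `f(l) = 0` at the
right endpoint, in the classical sense. -/
def IsRobinDirichletEigenvalue (γ l E : ℝ) : Prop :=
  ∃ f : ℝ → ℝ, ContDiff ℝ 2 f ∧ (∃ x ∈ Set.Icc 0 l, f x ≠ 0) ∧
    (∀ x ∈ Set.Icc 0 l, -(deriv (deriv f) x) = E * f x) ∧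
    -(deriv f 0) - γ * f 0 = 0 ∧ f l = 0

open Real Set

lemma exp_neg_mul_deriv_add_eq {f : ℝ → ℝ} {k a b : ℝ} (hf : ContDiff ℝ 2 f)
    (hode : ∀ x ∈ Icc a b, deriv (deriv f) x = k ^ 2 * f x) :
    ∀ x ∈ Icc a b,
      exp (-(k * x)) * (deriv f x + k * f x) = exp (-(k * a)) * (deriv f a + k * f a) := by
  have hf₁ : Differentiable ℝ f := hf.differentiable (by norm_num)
  have hf₂ : Differentiable ℝ (deriv f) := hf.differentiable_deriv_two
  have hf₁_cont := hf₁.continuous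
  have hf₂_cont := hf₂.continuous
  refine constant_of_has_deriv_right_zero (by fun_prop) fun x hx => ?_
  have hexp : HasDerivAt (fun x => exp (-(k * x))) (-k * exp (-(k * x))) x := by
    simpa [mul_comm] using ((hasDerivAt_id x).const_mul k).neg.exp
  have hderiv := hexp.mul ((hf₂ x).hasDerivAt.add ((hf₁ x).hasDerivAt.const_mul k))
  rw [hode x (Ico_subset_Icc_self hx)] at hderiv
  exact (hderiv.congr_deriv (by simp only [Pi.add_apply]; ring)).hasDerivWithinAt

lemma mul_eq_cosh_sinh_of_deriv_deriv_eq {f : ℝ → ℝ} {k b : ℝ} (hf : ContDiff ℝ 2 f)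
    (hode : ∀ x ∈ Icc 0 b, deriv (deriv f) x = k ^ 2 * f x) :
    ∀ x ∈ Icc 0 b, k * f x = k * f 0 * cosh (k * x) + deriv f 0 * sinh (k * x) := by
  intro x hx
  have hplus := exp_neg_mul_deriv_add_eq hf hode x hx
  have hminus := exp_neg_mul_deriv_add_eq (k := -k) hf (by simpa only [neg_sq] using hode) x hx
  have hexp : exp (k * x) * exp (-(k * x)) = 1 := by rw [← exp_add]; simp
  simp only [mul_zero, neg_zero, exp_zero, one_mul, neg_mul, neg_neg] at hplus hminus
  rw [cosh_eq, sinh_eq]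
  linear_combination exp (k * x) / 2 * hplus - exp (-(k * x)) / 2 * hminus - k * f x * hexp

lemma isRobinDirichletEigenvalue_neg_sq_iff {γ l k : ℝ} (hk : k ≠ 0) (hl : 0 < l) :
    IsRobinDirichletEigenvalue γ l (-k ^ 2) ↔ k * cosh (k * l) = γ * sinh (k * l) := by
  constructor
  · rintro ⟨f, hf, ⟨x₀, hx₀, hfx₀⟩, hode, hrobin, hfl⟩
    have hsol := mul_eq_cosh_sinh_of_deriv_deriv_eq (k := k) hf fun x hx => by linarith [hode x hx]
    have hf'0 : deriv f 0 = -γ * f 0 := by linarith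
    have hf0 : f 0 ≠ 0 := by
      intro hf0
      have := hsol x₀ hx₀
      rw [hf'0, hf0] at this
      simp only [mul_zero, zero_mul, add_zero, mul_eq_zero] at this
      exact this.elim hk hfx₀
    have hsol_l := hsol l (right_mem_Icc.2 hl.le)
    rw [hfl, hf'0] at hsol_l
    exact mul_left_cancel₀ hf0 (by linear_combination -hsol_l)
  · intro hroot
    have hinner (x : ℝ) : HasDerivAt (fun x => k * (l - x)) (-k) x := by
      simpa using ((hasDerivAt_id x).const_sub l).const_mul k
    have hderiv : deriv (fun x => sinh (k * (l - x))) = fun x => -k * cosh (k * (l - x)) := by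
      funext x
      rw [(hinner x).sinh.deriv]
      ring
    refine ⟨fun x => sinh (k * (l - x)), by fun_prop,
      ⟨0, left_mem_Icc.2 hl.le, by simpa using ⟨hk, hl.ne'⟩⟩, fun x _ => ?_, ?_, by simp⟩
    · rw [hderiv, ((hinner x).cosh.const_mul (-k)).deriv]
      ring
    · rw [hderiv]
      simp only [sub_zero]
      linear_combination hroot

lemma sinh_lt_mul_cosh {t : ℝ} (ht : 0 < t) : sinh t < t * cosh t := by
  have hderiv (s : ℝ) : HasDerivAt (fun s => s * cosh s - sinh s) (s * sinh s) s :=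
    (((hasDerivAt_id s).mul (hasDerivAt_cosh s)).sub (hasDerivAt_sinh s)).congr_deriv
      (by simp only [id, one_mul]; ring)
  have hmono : StrictMonoOn (fun s => s * cosh s - sinh s) (Ici 0) := by
    refine strictMonoOn_of_deriv_pos (convex_Ici 0) (by fun_prop) fun s hs => ?_
    rw [interior_Ici] at hs
    rw [(hderiv s).deriv]
    exact mul_pos hs (sinh_pos_iff.2 hs)
  simpa using hmono self_mem_Ici ht.le ht

lemma strictMonoOn_mul_cosh_div_sinh : StrictMonoOn (fun t => t * cosh t / sinh t) (Ioi 0) := by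
  refine strictMonoOn_of_deriv_pos (convex_Ioi 0) ?_ fun t ht => ?_
  · exact continuousOn_id.mul continuous_cosh.continuousOn |>.div continuous_sinh.continuousOn
      fun t ht => (sinh_pos_iff.2 ht).ne'
  replace ht : 0 < t := by rwa [interior_Ioi] at ht
  have hsinh : 0 < sinh t := sinh_pos_iff.2 ht
  have hderiv : HasDerivAt (fun t => t * cosh t / sinh t)
      (((1 * cosh t + t * sinh t) * sinh t - t * cosh t * cosh t) / sinh t ^ 2) t :=
    ((hasDerivAt_id t).mul (hasDerivAt_cosh t)).div (hasDerivAt_sinh t) hsinh.ne'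
  rw [hderiv.deriv]
  have h2t : 2 * t < 2 * sinh t * cosh t := sinh_two_mul t ▸ self_lt_sinh_iff.2 (by positivity)
  have hnum : (1 * cosh t + t * sinh t) * sinh t - t * cosh t * cosh t = sinh t * cosh t - t := by
    linear_combination -t * cosh_sq_sub_sinh_sq t
  rw [hnum]
  exact div_pos (by linarith) (by positivity)

lemma eq_of_mul_cosh_eq_mul_sinh {c s t : ℝ} (hs : 0 < s) (ht : 0 < t)
    (hs_root : s * cosh s = c * sinh s) (ht_root : t * cosh t = c * sinh t) : s = t := by
  apply strictMonoOn_mul_cosh_div_sinh.injOn hs ht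
  show s * cosh s / sinh s = t * cosh t / sinh t
  rw [hs_root, ht_root, mul_div_cancel_right₀ _ (sinh_pos_iff.2 hs).ne',
    mul_div_cancel_right₀ _ (sinh_pos_iff.2 ht).ne']

lemma exists_pos_mul_cosh_eq_mul_sinh_iff {c : ℝ} :
    (∃ t, 0 < t ∧ t * cosh t = c * sinh t) ↔ 1 < c := by
  constructor
  · rintro ⟨t, ht, hroot⟩
    have hsinh : 0 < sinh t := sinh_pos_iff.2 ht
    nlinarith [sinh_lt_mul_cosh ht]
  intro hc
  -- `c sinh t - t cosh t` is positive at `arcosh c`, where `cosh = c`, and negative beyond `c`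
  set a := arcosh c
  have ha : 0 < a := arcosh_pos hc
  have hleft : 0 ≤ c * sinh a - a * cosh a := by
    rw [cosh_arcosh hc.le]
    nlinarith [self_lt_sinh_iff.2 ha]
  have hright : c * sinh (a + c) - (a + c) * cosh (a + c) ≤ 0 := by
    nlinarith [sinh_lt_cosh (a + c), cosh_pos (a + c)]
  obtain ⟨t, ht, hroot⟩ := intermediate_value_Icc' (f := fun t => c * sinh t - t * cosh t)
    (by linarith) (by fun_prop) ⟨hright, hleft⟩
  exact ⟨t, ha.trans_le ht.1, by linarith [hroot]⟩

lemma neg_and_isRobinDirichletEigenvalue_iff {γ l E : ℝ} (hl : 0 < l) :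
    E < 0 ∧ IsRobinDirichletEigenvalue γ l E ↔
      ∃ t, 0 < t ∧ t * cosh t = γ * l * sinh t ∧ E = -(t / l) ^ 2 := by
  constructor
  · rintro ⟨hE, heig⟩
    set k := √(-E)
    have hk : 0 < k := sqrt_pos.2 (neg_pos.2 hE)
    have hE_eq : E = -k ^ 2 := by rw [sq_sqrt (neg_pos.2 hE).le, neg_neg]
    rw [hE_eq, isRobinDirichletEigenvalue_neg_sq_iff hk.ne' hl] at heig
    refine ⟨k * l, mul_pos hk hl, by linear_combination l * heig, ?_⟩
    rw [mul_div_cancel_right₀ k hl.ne', hE_eq]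
  · rintro ⟨t, ht, hroot, rfl⟩
    have hk : t / l ≠ 0 := (div_pos ht hl).ne'
    refine ⟨neg_neg_of_pos (by positivity), (isRobinDirichletEigenvalue_neg_sq_iff hk hl).2 ?_⟩
    rw [div_mul_cancel₀ t hl.ne']
    field_simp
    linear_combination hroot

theorem stmt_7_general (γ l : ℝ) (hl : 0 < l) :
    ((∃ E < (0 : ℝ), IsRobinDirichletEigenvalue γ l E) ↔ 1 < γ * l) ∧
    (1 < γ * l → ∃! E : ℝ, E < 0 ∧ IsRobinDirichletEigenvalue γ l E) := by
  simp only [neg_and_isRobinDirichletEigenvalue_iff hl]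
  refine ⟨?_, fun h => ?_⟩
  · rw [← exists_pos_mul_cosh_eq_mul_sinh_iff]
    exact ⟨fun ⟨_, t, ht, hroot, _⟩ => ⟨t, ht, hroot⟩,
      fun ⟨t, ht, hroot⟩ => ⟨_, t, ht, hroot, rfl⟩⟩
  obtain ⟨t, ht, hroot⟩ := exists_pos_mul_cosh_eq_mul_sinh_iff.2 h
  refine ⟨_, ⟨t, ht, hroot, rfl⟩, ?_⟩
  rintro _ ⟨s, hs, hs_root, rfl⟩
  rw [eq_of_mul_cosh_eq_mul_sinh hs ht hs_root hroot]

/-- (Proposition 2.2, first part.)  The operator `D_{γ,l}` has a negative eigenvalue if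
and only if `γ l > 1`, and in that case the negative eigenvalue is unique. -/
theorem stmt_7 (γ l : ℝ) (hγ : 0 < γ) (hl : 0 < l) :
    ((∃ E < (0 : ℝ), IsRobinDirichletEigenvalue γ l E) ↔ 1 < γ * l) ∧
    (1 < γ * l → ∃! E : ℝ, E < 0 ∧ IsRobinDirichletEigenvalue γ l E) :=
  stmt_7_general γ l hl
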